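/- arXiv:2007.07764 — 6 statements merged into one kernel-verified Lean document; each statement's English description precedes it below -/
import Mathlib

section
/- Let X and Y be metric spaces and f: X → Y a map which is simultaneously a homeomorphism and a quasi-isometry, i.e., f is a homeomorphism and there exist constants K ≥ 1 and ε ≥ 0 with (1/K)·dist(x,x') − ε ≤ dist(f(x), f(x')) ≤ K·dist(x,x') + ε for all x, x' ∈ X. If X is compressible, then Y is compressible. -/
open Filter Metric NNReal

/-- A function `φ : [0,∞) → [0,∞)` is sublinear if `φ(t)/t → 0` as `t → ∞`. -/
def Sublinear (φ : ℝ≥0 → ℝ≥0) : Prop :=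
  Tendsto (fun t : ℝ≥0 => (φ t : ℝ) / (t : ℝ)) atTop (nhds 0)

/-- A function `ψ : [0,∞) → [0,∞)` is proper if it is nondecreasing and `ψ(t) → ∞`. -/
def ProperFn (ψ : ℝ≥0 → ℝ≥0) : Prop :=
  Monotone ψ ∧ Tendsto ψ atTop atTop

/-- A metric space `Y` is compressible if for every proper `ψ` there are a
homeomorphism `h : Y → Y` and a sublinear `φ` such that points at distance `< ψ(R)`
are sent to points at distance `< φ(R)`. -/
def Compressible (Y : Type*) [MetricSpace Y] : Prop :=
  ∀ ψ : ℝ≥0 → ℝ≥0, ProperFn ψ →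
    ∃ (h : Y ≃ₜ Y) (φ : ℝ≥0 → ℝ≥0), Sublinear φ ∧
      ∀ (R : ℝ≥0) (x y : Y), dist x y < (ψ R : ℝ) → dist (h x) (h y) < (φ R : ℝ)

/-- If `f : X → Y` is simultaneously a homeomorphism and a quasi-isometry, and `X` is
compressible, then so is `Y`. -/
theorem compressible_of_homeo_quasiIsometry {X Y : Type*} [MetricSpace X] [MetricSpace Y]
    (f : X ≃ₜ Y) (K ε : ℝ) (hK : 1 ≤ K) (hε : 0 ≤ ε)
    (hlow : ∀ x x' : X, (1 / K) * dist x x' - ε ≤ dist (f x) (f x'))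
    (hup : ∀ x x' : X, dist (f x) (f x') ≤ K * dist x x' + ε)
    (hX : Compressible X) : Compressible Y := by
  intro ψ hψ
  have hK0 : (0:ℝ) < K := lt_of_lt_of_le one_pos hK
  set Kn : ℝ≥0 := K.toNNReal with hKn
  set εn : ℝ≥0 := ε.toNNReal with hεn
  have hKc : (Kn : ℝ) = K := Real.coe_toNNReal K hK0.le
  have hεc : (εn : ℝ) = ε := Real.coe_toNNReal ε hε
  have hKn1 : 1 ≤ Kn := by
    rw [← NNReal.coe_le_coe, hKc]; exact_mod_cast hK
  -- the proper function for X
  set ψ' : ℝ≥0 → ℝ≥0 := fun R => Kn * ψ R + Kn * εn with hψ'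
  have hψ'proper : ProperFn ψ' := by
    constructor
    · intro a b hab
      exact add_le_add_left (mul_le_mul_right (hψ.1 hab) Kn) _
    · apply tendsto_atTop_mono (fun R => ?_) (hψ.2)
      calc ψ R = 1 * ψ R := (one_mul _).symm
        _ ≤ Kn * ψ R := mul_le_mul_left hKn1 _
        _ ≤ ψ' R := le_add_of_nonneg_right zero_le
  obtain ⟨h, φ, hφsub, hφ⟩ := hX ψ' hψ'proper
  refine ⟨(f.symm.trans h).trans f, fun R => Kn * φ R + εn, ?_, ?_⟩
  · -- sublinearity
    have h1 : Tendsto (fun t : ℝ≥0 => K * ((φ t : ℝ) / (t : ℝ))) atTop (nhds (K * 0)) :=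
      hφsub.const_mul K
    have h2 : Tendsto (fun t : ℝ≥0 => ε / (t : ℝ)) atTop (nhds 0) := by
      apply Tendsto.div_atTop tendsto_const_nhds
      exact tendsto_coe_atTop.mpr tendsto_id
    have := (h1.add h2)
    rw [mul_zero, add_zero] at this
    apply this.congr
    intro t
    push_cast [hKc, hεc]
    ring
  · intro R y y' hyy'
    have hx : dist (f.symm y) (f.symm y') < (ψ' R : ℝ) := by
      have hl := hlow (f.symm y) (f.symm y')
      simp only [Homeomorph.apply_symm_apply] at hl
      have : (1 / K) * dist (f.symm y) (f.symm y') - ε < (ψ R : ℝ) :=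
        lt_of_le_of_lt hl hyy'
      have h3 : dist (f.symm y) (f.symm y') < K * ((ψ R : ℝ) + ε) := by
        rw [div_mul_eq_mul_div, sub_lt_iff_lt_add, one_mul, div_lt_iff₀ hK0] at this
        calc dist (f.symm y) (f.symm y') < ((ψ R : ℝ) + ε) * K := this
          _ = K * ((ψ R : ℝ) + ε) := mul_comm _ _
      calc dist (f.symm y) (f.symm y') < K * ((ψ R : ℝ) + ε) := h3
        _ = (ψ' R : ℝ) := by simp only [hψ', NNReal.coe_add, NNReal.coe_mul, hKc, hεc]; ring
    have hh := hφ R (f.symm y) (f.symm y') hx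
    have hu := hup (h (f.symm y)) (h (f.symm y'))
    calc dist (((f.symm.trans h).trans f) y) (((f.symm.trans h).trans f) y')
        = dist (f (h (f.symm y))) (f (h (f.symm y'))) := rfl
      _ ≤ K * dist (h (f.symm y)) (h (f.symm y')) + ε := hu
      _ < K * (φ R : ℝ) + ε := by
          have := mul_lt_mul_of_pos_left hh hK0
          linarith
      _ = ((Kn * φ R + εn : ℝ≥0) : ℝ) := by push_cast [hKc, hεc]; ring
end

section
/- For every natural number n, the Euclidean space ℝⁿ (i.e., EuclideanSpace ℝ (Fin n) with its standard Euclidean metric) is compressible. -/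
open Filter Metric NNReal

open MeasureTheory intervalIntegral Set Function


noncomputable section CompressAux

variable (ψ : ℝ≥0 → ℝ≥0)

/-- The weight function `u ↦ ψ(u²)`. -/
def cw (u : ℝ) : ℝ := (ψ (Real.toNNReal (u ^ 2)) : ℝ)

lemma cw_nonneg (u : ℝ) : 0 ≤ cw ψ u := (ψ _).coe_nonneg

lemma cw_neg (u : ℝ) : cw ψ (-u) = cw ψ u := by simp [cw]

variable {ψ}

lemma cw_mono (hψ : Monotone ψ) {u v : ℝ} (hu : 0 ≤ u) (huv : u ≤ v) :
    cw ψ u ≤ cw ψ v := by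
  have h2 : u ^ 2 ≤ v ^ 2 := by nlinarith
  exact NNReal.coe_le_coe.2 (hψ (Real.toNNReal_mono h2))

lemma cw_measurable (hψ : Monotone ψ) : Measurable (cw ψ) := by
  have h1 : Monotone fun r : ℝ => ((ψ (Real.toNNReal r) : ℝ)) := fun a b hab =>
    NNReal.coe_le_coe.2 (hψ (Real.toNNReal_mono hab))
  exact h1.measurable.comp (measurable_id.pow_const 2)

lemma cw_intInt (hψ : Monotone ψ) (a b : ℝ) :
    IntervalIntegrable (cw ψ) volume a b := by
  rw [intervalIntegrable_iff]
  refine Measure.integrableOn_of_bounded ?_ (cw_measurable hψ).aestronglyMeasurable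
    (M := cw ψ (max |a| |b|)) ?_
  · rw [Set.uIoc]; exact (measure_Ioc_lt_top).ne
  · refine ae_restrict_of_forall_mem measurableSet_uIoc fun x hx => ?_
    have hxM : |x| ≤ max |a| |b| := by
      rcases hx with ⟨h1, h2⟩
      have ha1 := neg_abs_le a; have ha2 := le_abs_self a
      have hb1 := neg_abs_le b; have hb2 := le_abs_self b
      have hma := le_max_left |a| |b|; have hmb := le_max_right |a| |b|
      have hlo : -(max |a| |b|) ≤ a ⊓ b := le_inf (by linarith) (by linarith)
      have hhi : a ⊔ b ≤ max |a| |b| := sup_le (by linarith) (by linarith)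
      exact abs_le.2 ⟨le_trans hlo h1.le, le_trans h2 hhi⟩
    have : cw ψ x = cw ψ |x| := by
      rcases abs_choice x with h | h
      · rw [h]
      · rw [h, cw_neg]
    rw [Real.norm_eq_abs, abs_of_nonneg (cw_nonneg ψ x), this]
    exact cw_mono hψ (abs_nonneg x) hxM

variable (ψ) in
/-- Primitive of the weight. -/
def cW (t : ℝ) : ℝ := ∫ u in (0:ℝ)..t, cw ψ u

lemma cW_zero : cW ψ 0 = 0 := by simp [cW]

lemma cW_sub (hψ : Monotone ψ) (a b : ℝ) :
    cW ψ b - cW ψ a = ∫ u in a..b, cw ψ u := by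
  have h := integral_add_adjacent_intervals (cw_intInt hψ 0 a) (cw_intInt hψ a b)
  unfold cW; linarith

lemma cInt_shift (hψ : Monotone ψ) {c e : ℝ} (hc : 0 ≤ c) (he : 0 ≤ e) :
    (∫ u in (0:ℝ)..e, cw ψ u) ≤ ∫ u in c..(c + e), cw ψ u := by
  have h := integral_comp_add_right (a := (0:ℝ)) (b := e) (cw ψ) c
  rw [zero_add] at h
  have hmono : (∫ u in (0:ℝ)..e, cw ψ u) ≤ ∫ u in (0:ℝ)..e, cw ψ (u + c) :=
    integral_mono_on he (cw_intInt hψ 0 e)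
      (by simpa using (cw_intInt hψ c (e + c)).comp_add_right c)
      (fun u hu => cw_mono hψ hu.1 (le_add_of_nonneg_right hc))
  calc (∫ u in (0:ℝ)..e, cw ψ u) ≤ ∫ u in (0:ℝ)..e, cw ψ (u + c) := hmono
    _ = ∫ u in c..(e + c), cw ψ u := h
    _ = ∫ u in c..(c + e), cw ψ u := by rw [add_comm]

lemma cInt_reflect (a b : ℝ) :
    (∫ u in a..b, cw ψ u) = ∫ u in (-b)..(-a), cw ψ u := by
  rw [← integral_comp_neg (cw ψ)]
  simp only [cw_neg]

lemma cW_mono (hψ : Monotone ψ) : Monotone (cW ψ) := fun a b hab => by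
  have h := cW_sub hψ a b
  have h2 : 0 ≤ ∫ u in a..b, cw ψ u :=
    integral_nonneg hab (fun u _ => cw_nonneg ψ u)
  linarith

lemma cW_key (hψ : Monotone ψ) {x y : ℝ} (hyx : y ≤ x) :
    cW ψ ((x - y) / 2) ≤ cW ψ x - cW ψ y := by
  set d := (x - y) / 2 with hd
  have hd0 : 0 ≤ d := by simp only [hd]; linarith
  rw [cW_sub hψ y x]
  rcases le_total d x with hx | hx
  · have hsplit := integral_add_adjacent_intervals (cw_intInt hψ y (x - d)) (cw_intInt hψ (x - d) x)
    have h1 : 0 ≤ ∫ u in y..(x - d), cw ψ u :=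
      integral_nonneg (by simp only [hd] at *; linarith) (fun u _ => cw_nonneg ψ u)
    have h2 : cW ψ d ≤ ∫ u in (x - d)..x, cw ψ u := by
      have := cInt_shift hψ (c := x - d) (e := d) (by linarith) hd0
      rw [show x - d + d = x by ring] at this
      exact this
    unfold cW at h2 ⊢
    linarith
  · have hy : y ≤ -d := by simp only [hd] at *; linarith
    have hyd : y + d ≤ x := by simp only [hd] at *; linarith
    have hsplit := integral_add_adjacent_intervals (cw_intInt hψ y (y + d)) (cw_intInt hψ (y + d) x)
    have h1 : 0 ≤ ∫ u in (y + d)..x, cw ψ u :=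
      integral_nonneg hyd (fun u _ => cw_nonneg ψ u)
    have h2 : cW ψ d ≤ ∫ u in y..(y + d), cw ψ u := by
      rw [cInt_reflect y (y + d)]
      have := cInt_shift hψ (c := -(y + d)) (e := d) (by linarith) hd0
      rw [show -(y + d) + d = -y by ring] at this
      exact this
    unfold cW at h2 ⊢
    linarith

lemma cW_lower (hψ : Monotone ψ) {t : ℝ} (ht : 0 ≤ t) :
    t / 2 * cw ψ (t / 2) ≤ cW ψ t := by
  have h1 : cW ψ t - cW ψ (t / 2) = ∫ u in (t/2)..t, cw ψ u := cW_sub hψ _ _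
  have h2 : (∫ _u in (t/2)..t, cw ψ (t / 2)) ≤ ∫ u in (t/2)..t, cw ψ u :=
    integral_mono_on (by linarith) intervalIntegrable_const (cw_intInt hψ _ _)
      (fun u hu => cw_mono hψ (by linarith) hu.1)
  rw [intervalIntegral.integral_const, smul_eq_mul] at h2
  have h3 : 0 ≤ cW ψ (t / 2) := by
    have := cW_mono hψ (show (0:ℝ) ≤ t / 2 by linarith)
    rw [cW_zero] at this; exact this
  have : (t - t/2) = t/2 := by ring
  rw [this] at h2
  linarith

variable (ψ) in
/-- The odd superlinear homeomorphism `S(t) = t + ∫₀ᵗ ψ(u²) du`. -/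
def cS (t : ℝ) : ℝ := t + cW ψ t

lemma cS_zero : cS ψ 0 = 0 := by simp [cS, cW_zero]

lemma cS_strictMono (hψ : Monotone ψ) : StrictMono (cS ψ) := fun a b hab => by
  have := cW_mono hψ hab.le
  unfold cS; linarith

lemma cS_continuous (hψ : Monotone ψ) : Continuous (cS ψ) :=
  continuous_id.add (intervalIntegral.continuous_primitive (cw_intInt hψ) 0)

lemma cS_ge_self (hψ : Monotone ψ) {t : ℝ} (ht : 0 ≤ t) : t ≤ cS ψ t := by
  have := cW_mono hψ ht
  rw [cW_zero] at this
  unfold cS; linarith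

lemma cS_le_self (hψ : Monotone ψ) {t : ℝ} (ht : t ≤ 0) : cS ψ t ≤ t := by
  have := cW_mono hψ ht
  rw [cW_zero] at this
  unfold cS; linarith

lemma cS_surjective (hψ : Monotone ψ) : Function.Surjective (cS ψ) := by
  refine Continuous.surjective (cS_continuous hψ) ?_ ?_
  · exact tendsto_atTop_mono' atTop
      ((eventually_ge_atTop (0:ℝ)).mono fun t ht => cS_ge_self hψ ht) tendsto_id
  · exact tendsto_atBot_mono' atBot
      ((eventually_le_atBot (0:ℝ)).mono fun t ht => cS_le_self hψ ht) tendsto_id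

/-- Inverse of `cS` as an order isomorphism. -/
def cE (hψ : Monotone ψ) : ℝ ≃o ℝ :=
  StrictMono.orderIsoOfSurjective (cS ψ) (cS_strictMono hψ) (cS_surjective hψ)

lemma cE_symm_cS (hψ : Monotone ψ) (t : ℝ) : (cE hψ).symm (cS ψ t) = t :=
  StrictMono.orderIsoOfSurjective_symm_apply_self _ _ _ t

lemma cS_cE_symm (hψ : Monotone ψ) (a : ℝ) : cS ψ ((cE hψ).symm a) = a :=
  StrictMono.orderIsoOfSurjective_self_symm_apply _ _ _ a

lemma cE_symm_zero (hψ : Monotone ψ) : (cE hψ).symm 0 = 0 := by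
  have := cE_symm_cS hψ 0
  rwa [cS_zero] at this

lemma cE_symm_nonneg (hψ : Monotone ψ) {a : ℝ} (ha : 0 ≤ a) : 0 ≤ (cE hψ).symm a := by
  have := (cE hψ).symm.monotone ha
  rwa [cE_symm_zero hψ] at this

lemma cE_symm_key (hψ : Monotone ψ) {a b : ℝ} (hba : b ≤ a) :
    (cE hψ).symm a - (cE hψ).symm b ≤ 2 * (cE hψ).symm (a - b) := by
  set x := (cE hψ).symm a with hx
  set y := (cE hψ).symm b with hy
  have hyx : y ≤ x := (cE hψ).symm.monotone hba
  have hSx : cS ψ x = a := cS_cE_symm hψ a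
  have hSy : cS ψ y = b := cS_cE_symm hψ b
  have hkey : cS ψ ((x - y) / 2) ≤ a - b := by
    have h1 := cW_key hψ hyx
    have : cS ψ ((x - y) / 2) = (x - y) / 2 + cW ψ ((x - y) / 2) := rfl
    have h2 : cS ψ x - cS ψ y = (x - y) + (cW ψ x - cW ψ y) := by unfold cS; ring
    rw [hSx, hSy] at h2
    have hd : (x - y) / 2 ≤ x - y := by linarith
    rw [this]; linarith
  have := (cE hψ).symm.monotone hkey
  rw [cE_symm_cS hψ] at this
  linarith

lemma cE_symm_abs_key (hψ : Monotone ψ) (a b : ℝ) :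
    |(cE hψ).symm a - (cE hψ).symm b| ≤ 2 * (cE hψ).symm |a - b| := by
  rcases le_total b a with h | h
  · rw [abs_of_nonneg (sub_nonneg.2 ((cE hψ).symm.monotone h)), abs_of_nonneg (sub_nonneg.2 h)]
    exact cE_symm_key hψ h
  · rw [abs_of_nonpos (sub_nonpos.2 ((cE hψ).symm.monotone h)), abs_of_nonpos (sub_nonpos.2 h),
      neg_sub, neg_sub]
    exact cE_symm_key hψ h

/-- The sublinearity estimate: eventually `S⁻¹(ψ R) ≤ δ R`. -/
lemma cE_symm_sublinear (hψ : Monotone ψ) {δ : ℝ} (hδ : 0 < δ) :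
    ∀ᶠ R : ℝ≥0 in atTop, (cE hψ).symm (ψ R) ≤ δ * R := by
  filter_upwards [eventually_ge_atTop (Real.toNNReal (max (2 / δ) (4 / δ ^ 2)))] with R hR
  have hRr : max (2 / δ) (4 / δ ^ 2) ≤ (R : ℝ) := Real.toNNReal_le_iff_le_coe.1 hR
  have hR2 : 2 / δ ≤ (R : ℝ) := (le_max_left _ _).trans hRr
  have hR4 : 4 / δ ^ 2 ≤ (R : ℝ) := (le_max_right _ _).trans hRr
  set t := δ * (R : ℝ) with htdef
  have ht0 : 0 ≤ t := by positivity
  have ht2 : 1 ≤ t / 2 := by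
    rw [htdef]
    rw [div_le_iff₀ hδ] at hR2
    linarith
  have hRt : (R : ℝ) ≤ (t / 2) ^ 2 := by
    rw [htdef]
    rw [div_le_iff₀ (by positivity : (0:ℝ) < δ ^ 2)] at hR4
    nlinarith [R.coe_nonneg]
  have hw : (ψ R : ℝ) ≤ cw ψ (t / 2) := by
    unfold cw
    refine NNReal.coe_le_coe.2 (hψ ?_)
    rw [Real.le_toNNReal_iff_coe_le (by positivity)]
    exact hRt
  have hW := cW_lower hψ ht0
  have hwnn := cw_nonneg ψ (t / 2)
  have hcS : (ψ R : ℝ) ≤ cS ψ t := by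
    have h1 : cw ψ (t / 2) ≤ t / 2 * cw ψ (t / 2) := le_mul_of_one_le_left hwnn ht2
    unfold cS
    linarith
  have := (cE hψ).symm.monotone hcS
  rwa [cE_symm_cS hψ] at this

end CompressAux

/-- Euclidean space `ℝⁿ` is compressible. -/
theorem euclideanSpace_compressible (n : ℕ) :
    Compressible (EuclideanSpace ℝ (Fin n)) := by
  intro ψ hψp
  obtain ⟨hψ, -⟩ := hψp
  classical
  set s : ℝ → ℝ := fun t => (cE hψ).symm t with hsdef
  -- the coordinatewise homeomorphism
  let e : EuclideanSpace ℝ (Fin n) ≃ₜ (Fin n → ℝ) :=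
    (EuclideanSpace.equiv (Fin n) ℝ).toHomeomorph
  let P : (Fin n → ℝ) ≃ₜ (Fin n → ℝ) :=
    Homeomorph.piCongrRight (fun _ => (cE hψ).symm.toHomeomorph)
  let h : EuclideanSpace ℝ (Fin n) ≃ₜ EuclideanSpace ℝ (Fin n) := (e.trans P).trans e.symm
  have hcoord : ∀ (x : EuclideanSpace ℝ (Fin n)) (i : Fin n), h x i = s (x i) :=
    fun x i => rfl
  refine ⟨h, fun R => Real.toNNReal (2 * Real.sqrt n * s (ψ R) + 1), ?_, ?_⟩
  · -- Sublinearity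
    have hsnn : ∀ R : ℝ≥0, 0 ≤ s (ψ R) := fun R => cE_symm_nonneg hψ (ψ R).coe_nonneg
    have hcoe : ∀ R : ℝ≥0,
        ((Real.toNNReal (2 * Real.sqrt n * s (ψ R) + 1) : ℝ≥0) : ℝ)
          = 2 * Real.sqrt n * s (ψ R) + 1 := fun R =>
      Real.coe_toNNReal _ (add_nonneg (mul_nonneg (by positivity) (hsnn R)) zero_le_one)
    unfold Sublinear
    have hs0 : Tendsto (fun R : ℝ≥0 => s (ψ R) / (R : ℝ)) atTop (nhds 0) := by
      rw [Metric.tendsto_nhds]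
      intro ε hε
      filter_upwards [cE_symm_sublinear hψ (half_pos hε), eventually_ge_atTop (1 : ℝ≥0)]
        with R h1 h2
      have hR1 : (1 : ℝ) ≤ (R : ℝ) := by exact_mod_cast h2
      have hRpos : (0 : ℝ) < (R : ℝ) := by linarith
      have hq : s (ψ R) / (R : ℝ) ≤ ε / 2 := by
        rw [div_le_iff₀ hRpos]; linarith [h1]
      have hqnn : 0 ≤ s (ψ R) / (R : ℝ) := div_nonneg (hsnn R) hRpos.le
      rw [Real.dist_eq, sub_zero, abs_of_nonneg hqnn]
      linarith
    have hinv : Tendsto (fun R : ℝ≥0 => 1 / (R : ℝ)) atTop (nhds 0) := by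
      simp only [one_div]
      exact (NNReal.tendsto_coe_atTop.2 tendsto_id).inv_tendsto_atTop
    have hfun : (fun R : ℝ≥0 =>
        ((Real.toNNReal (2 * Real.sqrt n * s (ψ R) + 1) : ℝ≥0) : ℝ) / (R : ℝ))
        = fun R : ℝ≥0 => 2 * Real.sqrt n * (s (ψ R) / (R : ℝ)) + 1 / (R : ℝ) := by
      funext R
      rw [hcoe R]
      ring
    rw [hfun]
    have := ((hs0.const_mul (2 * Real.sqrt n)).add hinv)
    simpa using this
  · -- the compression estimate
    intro R x y hxy
    have hsmono : Monotone s := (cE hψ).symm.monotone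
    have hsnn : 0 ≤ s (ψ R) := cE_symm_nonneg hψ (ψ R).coe_nonneg
    have hco : ∀ i, |x i - y i| ≤ dist x y := by
      intro i
      rw [EuclideanSpace.dist_eq]
      have h1 : dist (x i) (y i) ^ 2 ≤ ∑ j, dist (x j) (y j) ^ 2 :=
        Finset.single_le_sum (f := fun j => dist (x j) (y j) ^ 2)
          (fun j _ => sq_nonneg _) (Finset.mem_univ i)
      calc |x i - y i| = dist (x i) (y i) := (Real.dist_eq _ _).symm
        _ = Real.sqrt (dist (x i) (y i) ^ 2) := (Real.sqrt_sq dist_nonneg).symm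
        _ ≤ _ := Real.sqrt_le_sqrt h1
    have hterm : ∀ i, dist (h x i) (h y i) ≤ 2 * s (ψ R) := by
      intro i
      rw [hcoord, hcoord, Real.dist_eq]
      calc |s (x i) - s (y i)| ≤ 2 * s |x i - y i| := cE_symm_abs_key hψ _ _
        _ ≤ 2 * s (ψ R) := by
            have : s |x i - y i| ≤ s (ψ R) :=
              hsmono (((hco i).trans hxy.le))
            linarith
    have hdist : dist (h x) (h y) ≤ Real.sqrt (n * (2 * s (ψ R)) ^ 2) := by
      rw [EuclideanSpace.dist_eq]
      refine Real.sqrt_le_sqrt ?_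
      calc ∑ i, dist (h x i) (h y i) ^ 2
          ≤ ∑ _i : Fin n, (2 * s (ψ R)) ^ 2 :=
            Finset.sum_le_sum fun i _ => pow_le_pow_left₀ dist_nonneg (hterm i) 2
        _ = n * (2 * s (ψ R)) ^ 2 := by
            rw [Finset.sum_const, Finset.card_univ, Fintype.card_fin, nsmul_eq_mul]
    have hsqrt : Real.sqrt (n * (2 * s (ψ R)) ^ 2)
        = Real.sqrt n * (2 * s (ψ R)) := by
      rw [Real.sqrt_mul (Nat.cast_nonneg n), Real.sqrt_sq (by linarith)]
    have hfinal : dist (h x) (h y) ≤ 2 * Real.sqrt n * s (ψ R) := by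
      rw [hsqrt] at hdist; linarith [hdist]
    have hcoe : ((Real.toNNReal (2 * Real.sqrt n * s (ψ R) + 1) : ℝ≥0) : ℝ)
        = 2 * Real.sqrt n * s (ψ R) + 1 :=
      Real.coe_toNNReal _ (add_nonneg (mul_nonneg (by positivity) hsnn) zero_le_one)
    rw [hcoe]
    linarith
end

section
/- Let Y be a compressible proper metric space and Z a compact metric space. Then the product Y × Z equipped with the ℓ²-product metric d((y,z),(y',z')) = (dist(y,y')² + dist(z,z')²)^{1/2} (i.e., WithLp 2 (Y × Z)) is compressible. -/
open Filter Metric NNReal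

/-- The product of a compressible proper metric space with a compact metric space,
equipped with the `ℓ²`-product metric, is compressible. -/
theorem compressible_prod_compact {Y Z : Type*} [MetricSpace Y] [ProperSpace Y]
    [MetricSpace Z] [CompactSpace Z] (hY : Compressible Y) :
    Compressible (WithLp 2 (Y × Z)) := by
  intro ψ hψ
  obtain ⟨h, φ, hφ, hcomp⟩ := hY ψ hψ
  -- bound on the diameter of Z
  obtain ⟨C, hC⟩ := Metric.isBounded_iff.mp (isCompact_univ (X := Z)).isBounded
  set C' : ℝ≥0 := Real.toNNReal C with hC'
  have hCz : ∀ z z' : Z, dist z z' ≤ (C' : ℝ) := fun z z' =>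
    le_trans (hC (Set.mem_univ z) (Set.mem_univ z')) (Real.le_coe_toNNReal C)
  -- dist formula
  have hdist : ∀ x y : WithLp 2 (Y × Z),
      dist x y = Real.sqrt (dist x.fst y.fst ^ 2 + dist x.snd y.snd ^ 2) := by
    intro x y
    rw [WithLp.prod_dist_eq_add (p := 2) (by norm_num) x y]
    rw [Real.sqrt_eq_rpow]
    norm_num
  have hfst : ∀ x y : WithLp 2 (Y × Z), dist x.fst y.fst ≤ dist x y := by
    intro x y
    rw [hdist]
    calc dist x.fst y.fst = Real.sqrt (dist x.fst y.fst ^ 2) := (Real.sqrt_sq dist_nonneg).symm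
      _ ≤ Real.sqrt (dist x.fst y.fst ^ 2 + dist x.snd y.snd ^ 2) := by
          apply Real.sqrt_le_sqrt; nlinarith [sq_nonneg (dist x.snd y.snd)]
  -- the homeomorphism
  let e : WithLp 2 (Y × Z) ≃ₜ Y × Z :=
    ⟨WithLp.equiv 2 (Y × Z), WithLp.prod_continuous_ofLp 2 Y Z,
      WithLp.prod_continuous_toLp 2 Y Z⟩
  let h' : WithLp 2 (Y × Z) ≃ₜ WithLp 2 (Y × Z) :=
    e.trans ((h.prodCongr (Homeomorph.refl Z)).trans e.symm)
  refine ⟨h', fun t => φ t + C', ?_, ?_⟩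
  · -- sublinearity
    have h1 : Tendsto (fun t : ℝ≥0 => (C' : ℝ) / (t : ℝ)) atTop (nhds 0) :=
      Tendsto.div_atTop tendsto_const_nhds
        (tendsto_coe_atTop.mpr tendsto_id)
    have := hφ.add h1
    rw [add_zero] at this
    refine this.congr fun t => ?_
    push_cast
    rw [add_div]
  · intro R x y hxy
    have h1 : dist x.fst y.fst < (ψ R : ℝ) := lt_of_le_of_lt (hfst x y) hxy
    have h2 : dist (h x.fst) (h y.fst) < (φ R : ℝ) := hcomp R x.fst y.fst h1
    have hx1 : (h' x).fst = h x.fst := rfl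
    have hx2 : (h' x).snd = x.snd := rfl
    rw [hdist, hx1, hx2]
    have hy1 : (h' y).fst = h y.fst := rfl
    have hy2 : (h' y).snd = y.snd := rfl
    rw [hy1, hy2]
    have hz : dist x.snd y.snd ≤ (C' : ℝ) := hCz _ _
    have hsum : Real.sqrt (dist (h x.fst) (h y.fst) ^ 2 + dist x.snd y.snd ^ 2)
        ≤ dist (h x.fst) (h y.fst) + dist x.snd y.snd := by
      have := Real.sqrt_sq (by positivity : (0:ℝ) ≤ dist (h x.fst) (h y.fst) + dist x.snd y.snd)
      rw [← this]
      apply Real.sqrt_le_sqrt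
      nlinarith [dist_nonneg (x := h x.fst) (y := h y.fst), dist_nonneg (x := x.snd) (y := y.snd)]
    calc Real.sqrt (dist (h x.fst) (h y.fst) ^ 2 + dist x.snd y.snd ^ 2)
        ≤ dist (h x.fst) (h y.fst) + dist x.snd y.snd := hsum
      _ < (φ R : ℝ) + (C' : ℝ) := add_lt_add_of_lt_of_le h2 hz
      _ = ((φ R + C' : ℝ≥0) : ℝ) := by push_cast; ring
end

section
/- Let E be a real inner product space and let ĥ: [0,∞) → [0,∞) satisfy ĥ(0) = 0 and suppose t ↦ ĥ(t)/t is nonincreasing on (0,∞). Define the radial map h: E → E by h(x) = (ĥ(‖x‖)/‖x‖)·x for x ≠ 0 and h(0) = 0. Then for all x, y ∈ E with ‖x‖ = ‖y‖, one has ‖h(x) − h(y)‖ ≤ 2·ĥ(‖x − y‖/2). -/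
/-- Key estimate for radial compressions: if `ĥ : [0,∞) → [0,∞)` has `ĥ(0) = 0` and
`t ↦ ĥ(t)/t` is nonincreasing on `(0,∞)`, then the radial map
`h(x) = (ĥ(‖x‖)/‖x‖) • x` (with `h(0) = 0`) satisfies, for `‖x‖ = ‖y‖`,
`‖h(x) − h(y)‖ ≤ 2 ĥ(‖x − y‖/2)`. -/
theorem radial_compression_estimate {E : Type*} [NormedAddCommGroup E]
    [InnerProductSpace ℝ E] (hh : ℝ → ℝ) (hh0 : hh 0 = 0)
    (hhnonneg : ∀ t : ℝ, 0 ≤ t → 0 ≤ hh t)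
    (hhanti : AntitoneOn (fun t : ℝ => hh t / t) (Set.Ioi 0))
    (x y : E) (hxy : ‖x‖ = ‖y‖) :
    ‖(hh ‖x‖ / ‖x‖) • x - (hh ‖y‖ / ‖y‖) • y‖ ≤ 2 * hh (‖x - y‖ / 2) := by
  rcases eq_or_ne x y with rfl | hne
  · simp [hh0, hhnonneg]
  rcases eq_or_ne x 0 with rfl | hx0
  · have : y = 0 := by simpa using hxy.symm
    simp [this, hh0]
  have hD : 0 < ‖x‖ := norm_pos_iff.mpr hx0
  set s : ℝ := ‖x - y‖ / 2 with hs
  have hspos : 0 < s := by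
    have : 0 < ‖x - y‖ := norm_pos_iff.mpr (sub_ne_zero.mpr hne)
    positivity
  have hsD : s ≤ ‖x‖ := by
    have : ‖x - y‖ ≤ ‖x‖ + ‖y‖ := norm_sub_le x y
    rw [← hxy] at this
    rw [hs]; linarith
  have hanti := hhanti (Set.mem_Ioi.mpr hspos) (Set.mem_Ioi.mpr (hspos.trans_le hsD)) hsD
  have hLHS : ‖(hh ‖x‖ / ‖x‖) • x - (hh ‖y‖ / ‖y‖) • y‖ = (hh ‖x‖ / ‖x‖) * ‖x - y‖ := by
    rw [← hxy, ← smul_sub, norm_smul, Real.norm_eq_abs,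
      abs_of_nonneg (div_nonneg (hhnonneg _ (norm_nonneg x)) (norm_nonneg x))]
  rw [hLHS]
  have h1 : (hh ‖x‖ / ‖x‖) * ‖x - y‖ ≤ (hh s / s) * ‖x - y‖ :=
    mul_le_mul_of_nonneg_right hanti (norm_nonneg _)
  have h2 : (hh s / s) * ‖x - y‖ = 2 * hh s := by
    have h3 : ‖x - y‖ = 2 * s := by rw [hs]; ring
    rw [h3, div_mul_eq_mul_div, mul_comm (hh s) (2*s), mul_assoc,
      mul_div_assoc, mul_div_cancel_left₀ _ hspos.ne']
  calc (hh ‖x‖ / ‖x‖) * ‖x - y‖ ≤ (hh s / s) * ‖x - y‖ := h1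
    _ = 2 * hh s := h2
end

section
/- Let ĥ: [0,∞) → [0,∞) be a strictly increasing continuous surjection (hence a homeomorphism of [0,∞) with inverse ĥ⁻¹) which is linearly controlled, meaning that for every constant c > 0, ĥ(c·ĥ⁻¹(t))/t → 1 as t → ∞. Let K ≥ 1, C ≥ 0, and let u: [0,∞) → [0,∞) be any function satisfying (1/K)·s − C ≤ u(s) ≤ K·s + C for all s ≥ 0. Then ĥ(u(ĥ⁻¹(t)))/t → 1 as t → ∞. -/
open Filter NNReal

/-- If `ĥ` is a linearly controlled homeomorphism of `[0,∞)` (with inverse `hinv`),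
and `u` satisfies the two-sided affine bounds `s/K − C ≤ u(s) ≤ K·s + C`, then
`ĥ(u(ĥ⁻¹(t)))/t → 1` as `t → ∞`. -/
theorem linearly_controlled_sandwich (hh hinv : ℝ≥0 → ℝ≥0)
    (hmono : StrictMono hh) (hcont : Continuous hh) (hsurj : Function.Surjective hh)
    (hinv_right : ∀ t : ℝ≥0, hh (hinv t) = t) (hinv_left : ∀ t : ℝ≥0, hinv (hh t) = t)
    (hlin : ∀ c : ℝ≥0, 0 < c →
      Tendsto (fun t : ℝ≥0 => (hh (c * hinv t) : ℝ) / (t : ℝ)) atTop (nhds 1))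
    (K C : ℝ≥0) (hK : 1 ≤ K) (u : ℝ≥0 → ℝ≥0)
    (hu : ∀ s : ℝ≥0, (s : ℝ) / K - C ≤ (u s : ℝ) ∧ (u s : ℝ) ≤ K * s + C) :
    Tendsto (fun t : ℝ≥0 => (hh (u (hinv t)) : ℝ) / (t : ℝ)) atTop (nhds 1) := by
  have hKpos : (0:ℝ) < (K:ℝ) := lt_of_lt_of_le one_pos (by exact_mod_cast hK)
  have hc1 : (0:ℝ≥0) < (2*K)⁻¹ := by positivity
  have hc2 : (0:ℝ≥0) < K + 1 := by positivity
  refine tendsto_of_tendsto_of_tendsto_of_le_of_le' (hlin _ hc1) (hlin _ hc2) ?_ ?_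
  · filter_upwards [eventually_ge_atTop (hh (2*K*C))] with t ht
    have hs : 2*K*C ≤ hinv t := by
      rw [← hmono.le_iff_le, hinv_right]; exact ht
    set s := hinv t with hsdef
    have hlow : (2*K)⁻¹ * s ≤ u s := by
      rw [← NNReal.coe_le_coe]
      have h1 := (hu s).1
      have hs' : (2:ℝ)*K*C ≤ s := by exact_mod_cast hs
      push_cast
      rw [inv_mul_le_iff₀ (by positivity : (0:ℝ) < 2*K)]
      have h1' : (s:ℝ) ≤ K * ((u s:ℝ) + C) := by
        rw [← div_le_iff₀' hKpos]; linarith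
      nlinarith [h1', hs']
    have := hmono.monotone hlow
    have ht' : (0:ℝ) ≤ (t:ℝ) := t.coe_nonneg
    exact div_le_div_of_nonneg_right (by exact_mod_cast this) ht' |>.trans_eq rfl
  · filter_upwards [eventually_ge_atTop (hh C)] with t ht
    have hs : C ≤ hinv t := by
      rw [← hmono.le_iff_le, hinv_right]; exact ht
    set s := hinv t with hsdef
    have hhigh : u s ≤ (K+1) * s := by
      rw [← NNReal.coe_le_coe]
      have h2 := (hu s).2
      have hs' : (C:ℝ) ≤ s := by exact_mod_cast hs
      push_cast
      nlinarith [h2, hs', hKpos]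
    have := hmono.monotone hhigh
    exact div_le_div_of_nonneg_right (by exact_mod_cast this) t.coe_nonneg |>.trans_eq rfl
end

section
/- Let X be a metric space, x₀ ∈ X, R₀ ≥ 0, and h: X → X a map. Let φ: [0,∞) → [0,∞) be a nondecreasing sublinear function such that diam(h(C)) ≤ φ(diam C) for every nonempty bounded subset C ⊆ X, and suppose dist(x₀, h(x₀)) ≤ R₀. Then for every K ≥ 1 and all real constants a, b there exists N such that for all real n ≥ N, the image h(closedBall(x₀, K·n + a)) is contained in the open ball ball(x₀, n/K − b). -/
open Filter Metric

/-- If `h : X → X` compresses diameters of bounded sets by a nondecreasing sublinear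
function `φ` and moves the basepoint at most `R₀`, then for every `K ≥ 1` and
constants `a, b`, for all sufficiently large `n` the image of the closed ball of
radius `K·n + a` is contained in the open ball of radius `n/K − b`. -/
theorem compressing_maps_large_balls_inside {X : Type*} [MetricSpace X] (x₀ : X)
    (R₀ : ℝ) (h : X → X) (φ : ℝ → ℝ)
    (hφ_nonneg : ∀ t : ℝ, 0 ≤ t → 0 ≤ φ t)
    (hφ_mono : MonotoneOn φ (Set.Ici 0))
    (hφ_sub : Tendsto (fun t : ℝ => φ t / t) atTop (nhds 0))
    (hdiam : ∀ C : Set X, C.Nonempty → Bornology.IsBounded C →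
      diam (h '' C) ≤ φ (diam C))
    (hbase : dist x₀ (h x₀) ≤ R₀) :
    ∀ K : ℝ, 1 ≤ K → ∀ a b : ℝ, ∃ N : ℝ, ∀ n : ℝ, N ≤ n →
      h '' closedBall x₀ (K * n + a) ⊆ ball x₀ (n / K - b) := by
  intro K hK a b
  have hK0 : (0:ℝ) < K := by linarith
  have hε : (0:ℝ) < 1/(4*K^2) := by positivity
  have hev : ∀ᶠ t in atTop, φ t / t < 1/(4*K^2) := hφ_sub.eventually (gt_mem_nhds hε)
  obtain ⟨T, hT⟩ := eventually_atTop.mp hev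
  refine ⟨max (max ((T - a)/K + 1) ((1 - a)/K)) (a/(3*K) + (4*K/3)*(R₀ + b) + 1),
    fun n hn => ?_⟩
  have hn1 := le_trans (le_max_left _ _) (le_trans (le_max_left _ _) hn)
  have hn2 := le_trans (le_max_right _ _) (le_trans (le_max_left _ _) hn)
  have hn3 := le_trans (le_max_right _ _) hn
  set r : ℝ := K * n + a with hr
  have hr1 : (1:ℝ) ≤ r := by
    have := (div_le_iff₀ hK0).mp hn2
    nlinarith
  have hrT : T ≤ r := by
    have := (div_le_iff₀ hK0).mp (by linarith : (T - a)/K ≤ n)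
    nlinarith
  have hr0 : (0:ℝ) < r := by linarith
  have hφr : φ r < r / (4*K^2) := by
    have := hT r hrT
    rw [div_lt_iff₀ hr0] at this
    calc φ r < 1/(4*K^2) * r := this
    _ = r / (4*K^2) := by ring
  rintro y ⟨x, hx, rfl⟩
  have hdx : dist x x₀ ≤ r := mem_closedBall.mp hx
  -- pairwise diameter bound
  have hpair : dist (h x) (h x₀) ≤ φ (dist x x₀) := by
    have hbd : Bornology.IsBounded ({x, x₀} : Set X) :=
      (Set.Finite.insert _ (Set.finite_singleton _)).isBounded
    have := hdiam {x, x₀} ⟨x, by simp⟩ hbd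
    rwa [Set.image_pair, Metric.diam_pair, Metric.diam_pair] at this
  have hmono : φ (dist x x₀) ≤ φ r :=
    hφ_mono (Set.mem_Ici.mpr dist_nonneg) (Set.mem_Ici.mpr (by linarith)) hdx
  have key : dist (h x) x₀ < r / (4*K^2) + R₀ := by
    calc dist (h x) x₀ ≤ dist (h x) (h x₀) + dist (h x₀) x₀ := dist_triangle _ _ _
    _ ≤ φ (dist x x₀) + R₀ := by
        have : dist (h x₀) x₀ ≤ R₀ := by rwa [dist_comm] at hbase
        linarith
    _ ≤ φ r + R₀ := by linarith
    _ < r / (4*K^2) + R₀ := by linarith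
  rw [mem_ball]
  have hfinal : r / (4*K^2) + R₀ < n / K - b := by
    have h3 : a ≤ (n - (4*K/3)*(R₀ + b) - 1) * (3*K) :=
      (div_le_iff₀ (by positivity : (0:ℝ) < 3*K)).mp (by linarith)
    have h4 : r / (4*K^2) < n / K - b - R₀ := by
      rw [div_lt_iff₀ (by positivity : (0:ℝ) < 4*K^2)]
      have hnK : n / K * K = n := div_mul_cancel₀ n (ne_of_gt hK0)
      nlinarith [sq_nonneg K]
    linarith
  linarith
end
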